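/- For every platform j and every real μ with 0 < μ ≤ n, the cost-per-value ratio of the continuous (linearly interpolated) extension is bounded by the marginal cost of the current level: c_j(μ)/v_j(μ) ≤ MC_j(⌈μ⌉). -/

import Mathlib

/-- The marginal cost of bid level `μ ≥ 1`:
`MC(μ) = (c(μ) − c(μ−1)) / (v(μ) − v(μ−1))`. -/
noncomputable def MC (c v : ℕ → ℝ) (μ : ℕ) : ℝ :=
  (c μ - c (μ - 1)) / (v μ - v (μ - 1))

/-- Linear interpolation of `f : ℕ → ℝ` to nonnegative reals:
for `⌊x⌋ ≤ x ≤ ⌊x⌋ + 1`,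
`interp f x = (⌈x⌉ − x)·f(⌊x⌋) + (x − ⌊x⌋)·f(⌈x⌉)`. -/
noncomputable def interp (f : ℕ → ℝ) (x : ℝ) : ℝ :=
  f ⌊x⌋₊ + (x - ⌊x⌋₊) * (f (⌊x⌋₊ + 1) - f ⌊x⌋₊)

/-! The average cost `c(m)/v(m)` of a level never exceeds its marginal cost `MC(m)`: inductively,
`c(m+1) = c(m) + MC(m+1)·Δv ≤ MC(m)·v(m) + MC(m+1)·Δv ≤ MC(m+1)·v(m+1)` since `MC` is
nondecreasing. On `[m-1, m]` the interpolated cost and value grow at the constant ratio `MC(m)`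
from a starting point `(v(m-1), c(m-1))` whose ratio is at most `MC(m)`, so the interpolated
ratio stays below `MC(m)`. -/

theorem interp_eq_of_mem_Icc (f : ℕ → ℝ) {k : ℕ} {x : ℝ} (hkx : (k : ℝ) ≤ x)
    (hxk : x ≤ k + 1) : interp f x = f k + (x - k) * (f (k + 1) - f k) := by
  rcases hxk.lt_or_eq with hlt | rfl
  · rw [interp, Nat.floor_eq_on_Ico k x ⟨hkx, hlt⟩]
  · rw [interp, ← Nat.cast_add_one, Nat.floor_natCast]
    push_cast
    ring

theorem MC_succ_mul_sub {c v : ℕ → ℝ} {k : ℕ} (h : v k < v (k + 1)) :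
    MC c v (k + 1) * (v (k + 1) - v k) = c (k + 1) - c k := by
  rw [MC, Nat.add_sub_cancel, div_mul_cancel₀ _ (sub_ne_zero.mpr h.ne')]

section

variable {n : ℕ} {c v : ℕ → ℝ}

theorem value_nonneg (hv0 : v 0 = 0) (hv : ∀ μ < n, v μ < v (μ + 1)) {m : ℕ} (hm : m ≤ n) :
    0 ≤ v m :=
  hv0 ▸ (strictMonoOn_Iic_of_lt_succ (fun k hk ↦ by simpa using hv k hk)).monotoneOn
    (Set.mem_Iic.mpr (Nat.zero_le n)) hm (Nat.zero_le m)

theorem cost_le_MC_succ_mul_value (hc0 : c 0 = 0) (hv0 : v 0 = 0)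
    (hv : ∀ μ < n, v μ < v (μ + 1))
    (hmono : ∀ μ, 1 ≤ μ → μ < n → MC c v μ ≤ MC c v (μ + 1)) :
    ∀ k < n, c k ≤ MC c v (k + 1) * v k
  | 0, _ => by simp [hc0, hv0]
  | k + 1, hk => by
    have ih := cost_le_MC_succ_mul_value hc0 hv0 hv hmono k (by omega)
    have hstep := MC_succ_mul_sub (c := c) (hv k (by omega))
    have hvk : 0 ≤ v (k + 1) := value_nonneg hv0 hv hk.le
    have hMC := mul_le_mul_of_nonneg_right (hmono (k + 1) (by omega) hk) hvk
    linarith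

end

theorem interp_cost_per_value_le_marginal_cost_general
    (n : ℕ) (c v : ℕ → ℝ)
    (hc0 : c 0 = 0) (hv0 : v 0 = 0)
    (hv : ∀ μ < n, v μ < v (μ + 1))
    (hmono : ∀ μ, 1 ≤ μ → μ < n → MC c v μ ≤ MC c v (μ + 1))
    (x : ℝ) (hx : 0 < x) (hxn : x ≤ n) :
    interp c x / interp v x ≤ MC c v ⌈x⌉₊ := by
  obtain ⟨k, hceil⟩ : ∃ k, ⌈x⌉₊ = k + 1 := Nat.exists_eq_add_one.mpr (Nat.ceil_pos.mpr hx)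
  obtain ⟨hkx, hxk⟩ := (Nat.ceil_eq_iff k.succ_ne_zero).mp hceil
  push_cast at hkx hxk
  have hkn : k < n := Nat.lt_iff_add_one_le.mpr (hceil ▸ Nat.ceil_le.mpr hxn)
  have hvk := value_nonneg hv0 hv hkn.le
  have hΔv := hv k hkn
  have hstep := MC_succ_mul_sub (c := c) hΔv
  have hstart := cost_le_MC_succ_mul_value hc0 hv0 hv hmono k hkn
  have hv_pos : 0 < interp v x := by
    rw [interp_eq_of_mem_Icc v hkx.le hxk]
    nlinarith
  rw [hceil, div_le_iff₀ hv_pos, interp_eq_of_mem_Icc c hkx.le hxk,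
    interp_eq_of_mem_Icc v hkx.le hxk, ← hstep]
  linear_combination hstart

/-- For every real `μ` with `0 < μ ≤ n`, the cost-per-value ratio of the
continuous extension is bounded by the marginal cost of the current level:
`c(μ)/v(μ) ≤ MC(⌈μ⌉)`. -/
theorem interp_cost_per_value_le_marginal_cost
    (n : ℕ) (c v : ℕ → ℝ)
    (hc0 : c 0 = 0) (hv0 : v 0 = 0)
    (hc : ∀ μ < n, c μ < c (μ + 1)) (hv : ∀ μ < n, v μ < v (μ + 1))
    (hmono : ∀ μ, 1 ≤ μ → μ < n → MC c v μ ≤ MC c v (μ + 1))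
    (x : ℝ) (hx : 0 < x) (hxn : x ≤ n) :
    interp c x / interp v x ≤ MC c v ⌈x⌉₊ :=
  interp_cost_per_value_le_marginal_cost_general n c v hc0 hv0 hv hmono x hx hxn
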